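/- arXiv:2210.17181 — 3 statements merged into one kernel-verified Lean document; each statement's English description precedes it below -/
import Mathlib

section
/- Let e = (1/|K|)∑_{k∈K} g_k + (1/(|K|ν)) r − (1/N)∑_{k∈N} g_k, where r ~ N(0, σ²I_d) is independent Gaussian noise and each ‖g_k‖₂ ≤ ϖ. Then E[‖e‖₂²] ≤ 4ϖ²(1 − |K|/N)² + dσ²/(|K|²ν²). -/
open MeasureTheory ProbabilityTheory Finset
open scoped NNReal RealInnerProductSpace

/-!
Write `e = b + c • r` with the deterministic bias `b` and `c = (|K| ν)⁻¹`. Since the noise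
coordinates are centred, the cross term `2 c ⟪b, r⟫` has mean zero, so
`E‖e‖² = ‖b‖² + c² E‖r‖² = ‖b‖² + c² d σ²`. For the bias, split the full sum into the devices
of `K` and the rest: `b = (1/|K| - 1/N) ∑_K g - (1/N) ∑_{N∖K} g`, whose norm is at most
`(1/|K| - 1/N) |K| ϖ + (1/N) (N - |K|) ϖ = 2 ϖ (1 - |K|/N)`.
-/

section Average

variable {ι E : Type*} [SeminormedAddCommGroup E] {g : ι → E} {ϖ : ℝ}

lemma norm_sum_le_card_mul {s : Finset ι} (hg : ∀ k ∈ s, ‖g k‖ ≤ ϖ) :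
    ‖∑ k ∈ s, g k‖ ≤ #s * ϖ := by
  simpa [sum_const, nsmul_eq_mul] using norm_sum_le_of_le s hg

lemma norm_average_sub_average_le_of_subset [NormedSpace ℝ E] {s t : Finset ι} (hst : s ⊆ t)
    (hs : s.Nonempty) (hg : ∀ k ∈ t, ‖g k‖ ≤ ϖ) :
    ‖(#s : ℝ)⁻¹ • ∑ k ∈ s, g k - (#t : ℝ)⁻¹ • ∑ k ∈ t, g k‖ ≤ 2 * ϖ * (1 - (#s : ℝ) / #t) := by
  classical
  have hs0 : (0 : ℝ) < #s := by exact_mod_cast hs.card_pos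
  have ht0 : (0 : ℝ) < #t := hs0.trans_le (by exact_mod_cast card_le_card hst)
  have hst' : (#s : ℝ) ≤ #t := by exact_mod_cast card_le_card hst
  have hinv : (#t : ℝ)⁻¹ ≤ (#s : ℝ)⁻¹ := inv_anti₀ hs0 hst'
  have hsum_s : ‖∑ k ∈ s, g k‖ ≤ #s * ϖ := norm_sum_le_card_mul fun k hk => hg k (hst hk)
  have hsum_rest : ‖∑ k ∈ t \ s, g k‖ ≤ (#t - #s) * ϖ := by
    have := norm_sum_le_card_mul (s := t \ s) fun k hk => hg k (mem_sdiff.mp hk).1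
    rwa [card_sdiff_of_subset hst, Nat.cast_sub (card_le_card hst)] at this
  have hsplit : (#s : ℝ)⁻¹ • ∑ k ∈ s, g k - (#t : ℝ)⁻¹ • ∑ k ∈ t, g k
      = ((#s : ℝ)⁻¹ - (#t : ℝ)⁻¹) • ∑ k ∈ s, g k - (#t : ℝ)⁻¹ • ∑ k ∈ t \ s, g k := by
    rw [← sum_sdiff hst]; module
  rw [hsplit]
  calc _ ≤ ((#s : ℝ)⁻¹ - (#t : ℝ)⁻¹) * ‖∑ k ∈ s, g k‖ + (#t : ℝ)⁻¹ * ‖∑ k ∈ t \ s, g k‖ := by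
        refine (norm_sub_le _ _).trans_eq ?_
        rw [norm_smul, norm_smul, Real.norm_of_nonneg (sub_nonneg.mpr hinv),
          Real.norm_of_nonneg (by positivity)]
    _ ≤ ((#s : ℝ)⁻¹ - (#t : ℝ)⁻¹) * (#s * ϖ) + (#t : ℝ)⁻¹ * ((#t - #s) * ϖ) := by
        gcongr
    _ = 2 * ϖ * (1 - (#s : ℝ) / #t) := by
        field_simp
        ring

end Average

namespace ProbabilityTheory

variable {Ω : Type*} {mΩ : MeasurableSpace Ω} {P : Measure Ω} {X : Ω → ℝ} {μ : ℝ} {v : ℝ≥0}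

lemma HasLaw.memLp_of_gaussianReal (hX : HasLaw X (gaussianReal μ v) P) (p : ℝ≥0) :
    MemLp X p P := by
  have h : MemLp id p (P.map X) := hX.map_eq ▸ memLp_id_gaussianReal p
  exact h.comp_of_map hX.aemeasurable

lemma HasLaw.integrable_of_gaussianReal (hX : HasLaw X (gaussianReal μ v) P) :
    Integrable X P :=
  memLp_one_iff_integrable.mp (by simpa using hX.memLp_of_gaussianReal 1)

lemma HasLaw.integral_eq_of_gaussianReal (hX : HasLaw X (gaussianReal μ v) P) :
    ∫ ω, X ω ∂P = μ := by
  rw [hX.integral_eq, integral_id_gaussianReal]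

lemma HasLaw.integral_sq_of_gaussianReal [IsProbabilityMeasure P]
    (hX : HasLaw X (gaussianReal μ v) P) :
    ∫ ω, X ω ^ 2 ∂P = v + μ ^ 2 := by
  have hvar : Var[X; P] = v := by rw [hX.variance_eq, variance_id_gaussianReal]
  rw [variance_eq_sub (hX.memLp_of_gaussianReal 2), hX.integral_eq_of_gaussianReal] at hvar
  simp only [Pi.pow_apply] at hvar
  linarith

end ProbabilityTheory

section GaussianVector

variable {Ω : Type*} {mΩ : MeasurableSpace Ω} {P : Measure Ω}

lemma integral_norm_add_smul_sq [IsProbabilityMeasure P] {E : Type*} [NormedAddCommGroup E]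
    [InnerProductSpace ℝ E]
    (a : E) (c : ℝ) {X : Ω → E} (hinner : Integrable (fun ω => ⟪a, X ω⟫) P)
    (hcentered : ∫ ω, ⟪a, X ω⟫ ∂P = 0) (hsq : Integrable (fun ω => ‖X ω‖ ^ 2) P) :
    ∫ ω, ‖a + c • X ω‖ ^ 2 ∂P = ‖a‖ ^ 2 + c ^ 2 * ∫ ω, ‖X ω‖ ^ 2 ∂P := by
  have hexpand : ∀ ω, ‖a + c • X ω‖ ^ 2 = ‖a‖ ^ 2 + 2 * c * ⟪a, X ω⟫ + c ^ 2 * ‖X ω‖ ^ 2 := by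
    intro ω
    rw [norm_add_sq_real, inner_smul_right, norm_smul, mul_pow, Real.norm_eq_abs, sq_abs]
    ring
  have hlin : Integrable (fun ω => ‖a‖ ^ 2 + 2 * c * ⟪a, X ω⟫) P :=
    (integrable_const _).add (hinner.const_mul _)
  simp_rw [hexpand]
  rw [integral_add hlin (hsq.const_mul _), integral_add (integrable_const _) (hinner.const_mul _),
    integral_const_mul, integral_const_mul, hcentered]
  simp

variable {n : Type*} [Fintype n] {μ : ℝ} {v : ℝ≥0} {r : Ω → EuclideanSpace ℝ n}

lemma EuclideanSpace.real_inner_eq_sum_mul (a x : EuclideanSpace ℝ n) :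
    ⟪a, x⟫ = ∑ i, a i * x i := by
  simp [PiLp.inner_apply, mul_comm]

lemma integrable_inner_of_hasLaw_gaussianReal
    (hr : ∀ i, HasLaw (fun ω => r ω i) (gaussianReal μ v) P) (a : EuclideanSpace ℝ n) :
    Integrable (fun ω => ⟪a, r ω⟫) P := by
  simp_rw [EuclideanSpace.real_inner_eq_sum_mul]
  exact integrable_finsetSum _ fun i _ => (hr i).integrable_of_gaussianReal.const_mul _

lemma integral_inner_eq_zero_of_hasLaw_gaussianReal
    (hr : ∀ i, HasLaw (fun ω => r ω i) (gaussianReal 0 v) P) (a : EuclideanSpace ℝ n) :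
    ∫ ω, ⟪a, r ω⟫ ∂P = 0 := by
  simp_rw [EuclideanSpace.real_inner_eq_sum_mul]
  rw [integral_finsetSum _ fun i _ => (hr i).integrable_of_gaussianReal.const_mul _]
  simp [integral_const_mul, (hr _).integral_eq_of_gaussianReal]

lemma integrable_norm_sq_of_hasLaw_gaussianReal
    (hr : ∀ i, HasLaw (fun ω => r ω i) (gaussianReal μ v) P) :
    Integrable (fun ω => ‖r ω‖ ^ 2) P := by
  simp_rw [EuclideanSpace.norm_sq_eq, Real.norm_eq_abs, sq_abs]
  exact integrable_finsetSum _ fun i _ => ((hr i).memLp_of_gaussianReal 2).integrable_sq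

lemma integral_norm_sq_of_hasLaw_gaussianReal [IsProbabilityMeasure P]
    (hr : ∀ i, HasLaw (fun ω => r ω i) (gaussianReal μ v) P) :
    ∫ ω, ‖r ω‖ ^ 2 ∂P = Fintype.card n * (v + μ ^ 2) := by
  simp_rw [EuclideanSpace.norm_sq_eq, Real.norm_eq_abs, sq_abs]
  rw [integral_finsetSum _ fun i _ => ((hr i).memLp_of_gaussianReal 2).integrable_sq]
  simp [(hr _).integral_sq_of_gaussianReal, mul_add]

end GaussianVector

theorem aggregation_error_bound_general {Ω : Type*} [MeasureSpace Ω]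
    (P : Measure Ω) [IsProbabilityMeasure P]
    {ι : Type*} (Nset Kset : Finset ι) (hKN : Kset ⊆ Nset)
    (hK : Kset.Nonempty)
    (d : ℕ) (ϖ ν σ : ℝ)
    (g : ι → EuclideanSpace ℝ (Fin d)) (hg : ∀ k ∈ Nset, ‖g k‖ ≤ ϖ)
    (r : Ω → EuclideanSpace ℝ (Fin d)) (hr : Measurable r)
    (hlaw : ∀ i : Fin d,
      Measure.map (fun ω => r ω i) P = gaussianReal 0 ⟨σ ^ 2, sq_nonneg σ⟩)
    (e : Ω → EuclideanSpace ℝ (Fin d))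
    (he : ∀ ω, e ω =
      ((Kset.card : ℝ)⁻¹) • ∑ k ∈ Kset, g k
        + ((Kset.card : ℝ) * ν)⁻¹ • r ω
        - ((Nset.card : ℝ)⁻¹) • ∑ k ∈ Nset, g k) :
    ∫ ω, ‖e ω‖ ^ 2 ∂P ≤
      4 * ϖ ^ 2 * (1 - (Kset.card : ℝ) / Nset.card) ^ 2
        + d * σ ^ 2 / ((Kset.card : ℝ) ^ 2 * ν ^ 2) := by
  set bias := ((Kset.card : ℝ)⁻¹) • ∑ k ∈ Kset, g k - ((Nset.card : ℝ)⁻¹) • ∑ k ∈ Nset, g k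
    with hbias_def
  have hcoord : ∀ i, HasLaw (fun ω => r ω i) (gaussianReal 0 ⟨σ ^ 2, sq_nonneg σ⟩) P :=
    fun i => ⟨by fun_prop, hlaw i⟩
  have he' : ∀ ω, e ω = bias + ((Kset.card : ℝ) * ν)⁻¹ • r ω := fun ω => by
    rw [he ω, hbias_def]; abel
  have hbias : ‖bias‖ ≤ 2 * ϖ * (1 - (Kset.card : ℝ) / Nset.card) :=
    norm_average_sub_average_le_of_subset hKN hK hg
  simp_rw [he']
  rw [integral_norm_add_smul_sq _ _ (integrable_inner_of_hasLaw_gaussianReal hcoord _)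
    (integral_inner_eq_zero_of_hasLaw_gaussianReal hcoord _)
    (integrable_norm_sq_of_hasLaw_gaussianReal hcoord),
    integral_norm_sq_of_hasLaw_gaussianReal hcoord]
  refine add_le_add ?_ (le_of_eq ?_)
  · calc ‖bias‖ ^ 2 ≤ (2 * ϖ * (1 - (Kset.card : ℝ) / Nset.card)) ^ 2 :=
          pow_le_pow_left₀ (norm_nonneg _) hbias 2
      _ = 4 * ϖ ^ 2 * (1 - (Kset.card : ℝ) / Nset.card) ^ 2 := by ring
  · simp only [Fintype.card_fin, ne_eq, OfNat.ofNat_ne_zero, not_false_eq_true, zero_pow, add_zero]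
    field_simp
    -- `((⟨σ ^ 2, _⟩ : ℝ≥0) : ℝ) = σ ^ 2` holds by `rfl` but is not found by `simp`
    rfl

theorem aggregation_error_bound {Ω : Type*} [MeasureSpace Ω]
    (P : Measure Ω) [IsProbabilityMeasure P]
    {ι : Type*} (Nset Kset : Finset ι) (hKN : Kset ⊆ Nset)
    (hK : Kset.Nonempty) (hN : Nset.Nonempty)
    (d : ℕ) (ϖ ν σ : ℝ) (hϖ : 0 ≤ ϖ) (hν : 0 < ν) (hσ : 0 < σ)
    (g : ι → EuclideanSpace ℝ (Fin d)) (hg : ∀ k ∈ Nset, ‖g k‖ ≤ ϖ)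
    (r : Ω → EuclideanSpace ℝ (Fin d)) (hr : Measurable r)
    (hlaw : ∀ i : Fin d,
      Measure.map (fun ω => r ω i) P = gaussianReal 0 ⟨σ ^ 2, sq_nonneg σ⟩)
    (hindep : iIndepFun (fun i ω => r ω i) P)
    (e : Ω → EuclideanSpace ℝ (Fin d))
    (he : ∀ ω, e ω =
      ((Kset.card : ℝ)⁻¹) • ∑ k ∈ Kset, g k
        + ((Kset.card : ℝ) * ν)⁻¹ • r ω
        - ((Nset.card : ℝ)⁻¹) • ∑ k ∈ Nset, g k) :
    ∫ ω, ‖e ω‖ ^ 2 ∂P ≤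
      4 * ϖ ^ 2 * (1 - (Kset.card : ℝ) / Nset.card) ^ 2
        + d * σ ^ 2 / ((Kset.card : ℝ) ^ 2 * ν ^ 2) :=
  aggregation_error_bound_general P Nset Kset hKN hK d ϖ ν σ g hg r hr hlaw e he
end

section
/- Let c_1 ≤ … ≤ c_N be positive reals, B > 0 with c_1 ≤ B, and Q = {k : c_k < B}. The minimum of f(K, θ) = 4(1 − |K|/N)² + dσ²/(|K|²θ²) subject to K ⊆ {1,…,N}, θ ≤ min{min_{s∈K} c_s, B} is attained at one of the |Q|+1 candidate solutions: (θ_i, K_i) = (c_i, {k : c_k ≥ c_i}) for 1 ≤ i ≤ |Q|, or (θ_{|Q|+1}, K_{|Q|+1}) = (B, {k : c_k ≥ B}). -/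
/-- Objective of the device-scheduling problem P2. -/
noncomputable def schedObj (N : ℕ) (d σ : ℝ) (K : Finset (Fin N)) (θ : ℝ) : ℝ :=
  4 * (1 - (K.card : ℝ) / N) ^ 2 + d * σ ^ 2 / ((K.card : ℝ) ^ 2 * θ ^ 2)

lemma sched_mono (N : ℕ) (hN : 0 < N) (d σ : ℝ) (hd : 0 < d) (hσ : 0 < σ)
    (K K' : Finset (Fin N)) (θ θ' : ℝ) (hK : K.Nonempty) (hθ : 0 < θ)
    (hsub : K ⊆ K') (hθle : θ ≤ θ') :
    schedObj N d σ K' θ' ≤ schedObj N d σ K θ := by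
  have hcard : (K.card : ℝ) ≤ K'.card := by exact_mod_cast Finset.card_le_card hsub
  have hcard1 : (1 : ℝ) ≤ K.card := by exact_mod_cast Finset.card_pos.mpr hK
  have hcardN : (K'.card : ℝ) ≤ N := by
    have := Finset.card_le_card (Finset.subset_univ K')
    simp [Finset.card_univ] at this
    exact_mod_cast this
  have hNpos : (0 : ℝ) < N := by exact_mod_cast hN
  unfold schedObj
  have h1 : (1 - (K'.card : ℝ) / N) ^ 2 ≤ (1 - (K.card : ℝ) / N) ^ 2 := by
    apply pow_le_pow_left₀
    · have : (K'.card : ℝ) / N ≤ 1 := by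
        rw [div_le_one hNpos]; exact hcardN
      linarith
    · apply sub_le_sub_left
      exact div_le_div_of_nonneg_right hcard hNpos.le
  have h2 : d * σ ^ 2 / ((K'.card : ℝ) ^ 2 * θ' ^ 2) ≤
      d * σ ^ 2 / ((K.card : ℝ) ^ 2 * θ ^ 2) := by
    apply div_le_div_of_nonneg_left
    · positivity
    · positivity
    · apply mul_le_mul
      · exact pow_le_pow_left₀ (by linarith) hcard 2
      · exact pow_le_pow_left₀ hθ.le hθle 2
      · positivity
      · positivity
  linarith

theorem finite_candidate_optimality (N : ℕ) (hN : 0 < N) (d σ B : ℝ)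
    (hd : 0 < d) (hσ : 0 < σ) (hB : 0 < B)
    (c : Fin N → ℝ) (hc : ∀ k, 0 < c k) (hsort : Monotone c)
    (hc1 : c ⟨0, hN⟩ ≤ B) :
    ∀ (K : Finset (Fin N)) (θ : ℝ), K.Nonempty → 0 < θ →
      (∀ s ∈ K, θ ≤ c s) → θ ≤ B →
      ∃ (θ' : ℝ) (K' : Finset (Fin N)),
        ((∃ i : Fin N, c i < B ∧ θ' = c i ∧
            K' = Finset.univ.filter fun k => c i ≤ c k) ∨
          (θ' = B ∧ K' = Finset.univ.filter fun k => B ≤ c k)) ∧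
        schedObj N d σ K' θ' ≤ schedObj N d σ K θ := by
  intro K θ hK hθ hθc hθB
  by_cases h : ∃ s ∈ K, c s < B
  · obtain ⟨i, hiK, hmin⟩ := Finset.exists_min_image K c hK
    obtain ⟨s, hsK, hsB⟩ := h
    have hiB : c i < B := lt_of_le_of_lt (hmin s hsK) hsB
    refine ⟨c i, Finset.univ.filter fun k => c i ≤ c k,
      Or.inl ⟨i, hiB, rfl, rfl⟩, ?_⟩
    apply sched_mono N hN d σ hd hσ K _ θ _ hK hθ
    · intro k hk
      simp only [Finset.mem_filter, Finset.mem_univ, true_and]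
      exact hmin k hk
    · exact hθc i hiK
  · push_neg at h
    refine ⟨B, Finset.univ.filter fun k => B ≤ c k, Or.inr ⟨rfl, rfl⟩, ?_⟩
    apply sched_mono N hN d σ hd hσ K _ θ _ hK hθ
    · intro k hk
      simp only [Finset.mem_filter, Finset.mem_univ, true_and]
      exact h k hk
    · exact hθB
end

section
/- Suppose c_1 ≤ εσ/(2φ) and 1/(N²c_1²) > 4/(dσ²). If a feasible scheduled pair (K, θ) satisfies |K|·θ ≥ 1/√(1/(N²c_1²) − 4/(dσ²)), then 4(1 − |K|/N)² + dσ²/(|K|²θ²) ≤ dσ²/(N²c_1²); i.e., device scheduling achieves a smaller optimality-gap bound than full participation with θ = c_1. -/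
theorem scheduling_beats_full_participation (N : ℕ) (hN : 0 < N)
    (d σ ε φ c1 θ : ℝ) (hd : 0 < d) (hσ : 0 < σ) (hε : 0 < ε) (hφ : 0 < φ)
    (hc1 : 0 < c1) (hθ : 0 < θ)
    (c : Fin N → ℝ) (hc1min : ∀ k, c1 ≤ c k)
    (hc1B : c1 ≤ ε * σ / (2 * φ))
    (hgap : 4 / (d * σ ^ 2) < 1 / ((N : ℝ) ^ 2 * c1 ^ 2))
    (K : Finset (Fin N)) (hK : K.Nonempty)
    (hfeas1 : ∀ s ∈ K, θ ≤ c s) (hfeas2 : θ ≤ ε * σ / (2 * φ))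
    (hcond : 1 / Real.sqrt (1 / ((N : ℝ) ^ 2 * c1 ^ 2) - 4 / (d * σ ^ 2)) ≤
      (K.card : ℝ) * θ) :
    4 * (1 - (K.card : ℝ) / N) ^ 2 + d * σ ^ 2 / ((K.card : ℝ) ^ 2 * θ ^ 2) ≤
      d * σ ^ 2 / ((N : ℝ) ^ 2 * c1 ^ 2) := by
  set A : ℝ := 1 / ((N : ℝ) ^ 2 * c1 ^ 2) - 4 / (d * σ ^ 2) with hAdef
  have hA : 0 < A := by simp only [hAdef]; linarith
  have hsA : 0 < Real.sqrt A := Real.sqrt_pos.mpr hA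
  have hsq : Real.sqrt A ^ 2 = A := Real.sq_sqrt hA.le
  have hKpos : 0 < (K.card : ℝ) := by exact_mod_cast hK.card_pos
  have hKθ : 0 < (K.card : ℝ) * θ := mul_pos hKpos hθ
  have h1 : 1 ≤ (K.card : ℝ) * θ * Real.sqrt A := by
    rw [div_le_iff₀ hsA] at hcond
    linarith
  have h2 : 1 ≤ ((K.card : ℝ) * θ) ^ 2 * A := by
    nlinarith [mul_pos hKθ hsA]
  have hdσ : 0 < d * σ ^ 2 := by positivity
  have hNc : 0 < (N : ℝ) ^ 2 * c1 ^ 2 := by positivity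
  have h3 : d * σ ^ 2 / ((K.card : ℝ) ^ 2 * θ ^ 2) ≤ d * σ ^ 2 * A := by
    rw [div_le_iff₀ (by positivity)]
    nlinarith [sq_nonneg ((K.card : ℝ) * θ)]
  have hKN : (K.card : ℝ) ≤ N := by
    exact_mod_cast Finset.card_le_card (Finset.subset_univ K) |>.trans_eq
      (by simp)
  have hx : 0 ≤ (K.card : ℝ) / N := by positivity
  have hx1 : (K.card : ℝ) / N ≤ 1 := by
    rw [div_le_one (by exact_mod_cast hN)]; exact hKN
  have h4 : 4 * (1 - (K.card : ℝ) / N) ^ 2 ≤ 4 := by nlinarith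
  have h5 : d * σ ^ 2 * A = d * σ ^ 2 / ((N : ℝ) ^ 2 * c1 ^ 2) - 4 := by
    field_simp [hAdef]
    rw [hAdef]; field_simp
  linarith
end
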